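/- Let n ≥ 1 and let J : ℝⁿ × ℝ → ℝ be a measurable kernel satisfying: supp J ⊂ ℝⁿ × [0,∞); J ≥ 0; J ∈ L¹(ℝ^{n+1}) with ∬ J = 1; and J has compact support. Let f ∈ L¹(ℝⁿ) ∩ L^∞(ℝⁿ), and let u be the unique bounded continuous solution on ℝⁿ × [0,∞) of u(x,t) = ∬ J(x−y, t−s) ū(y,s) dy ds, where ū = f for s < 0 and ū = u for s ≥ 0. Then for every t ≥ 0, u(·,t) ∈ L¹(ℝⁿ) and ∫_{ℝⁿ} u(x,t) dx = ∫_{ℝⁿ} f(x) dx. -/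

import Mathlib

open MeasureTheory Real Set

namespace CTRW

variable {n : ℕ}

abbrev Sp (n : ℕ) := EuclideanSpace ℝ (Fin n)

variable (J : Sp n × ℝ → ℝ) (f : Sp n → ℝ) (u : Sp n × ℝ → ℝ)

/-- global a.e.-measurability of `u` -/
lemma aemeas_u (hfmeas : Measurable f)
    (hu_past : ∀ (y : Sp n) (s : ℝ), s < 0 → u (y, s) = f y)
    (hu_cont : ContinuousOn u {p : Sp n × ℝ | 0 ≤ p.2}) :
    AEMeasurable u (volume : Measure (Sp n × ℝ)) := by
  set s : Set (Sp n × ℝ) := {p | 0 ≤ p.2} with hs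
  have hsm : MeasurableSet s := (isClosed_le continuous_const continuous_snd).measurableSet
  have h1 : AEMeasurable u ((volume : Measure (Sp n × ℝ)).restrict s) :=
    hu_cont.aemeasurable hsm
  have h2 : AEMeasurable u ((volume : Measure (Sp n × ℝ)).restrict sᶜ) := by
    have hbase : AEMeasurable (fun p : Sp n × ℝ => f p.1)
        ((volume : Measure (Sp n × ℝ)).restrict sᶜ) :=
      (hfmeas.comp measurable_fst).aemeasurable
    refine hbase.congr ?_
    rw [Filter.EventuallyEq, ae_restrict_iff' hsm.compl]
    filter_upwards with p hp
    have : p.2 < 0 := by simpa [hs, not_le] using hp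
    exact (hu_past p.1 p.2 this).symm
  have h3 := h1.add_measure h2
  rwa [Measure.restrict_add_restrict_compl hsm] at h3

/-- measurability of time-slices of `u` -/
lemma slice_meas (hfmeas : Measurable f)
    (hu_past : ∀ (y : Sp n) (s : ℝ), s < 0 → u (y, s) = f y)
    (hu_cont : ContinuousOn u {p : Sp n × ℝ | 0 ≤ p.2}) :
    ∀ s : ℝ, Measurable (fun y : Sp n => u (y, s)) := by
  intro s
  rcases lt_or_ge s 0 with h | h
  · have : (fun y : Sp n => u (y, s)) = f := funext fun y => hu_past y s h
    rw [this]; exact hfmeas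
  · have hc : Continuous (fun y : Sp n => u (y, s)) := by
      refine hu_cont.comp_continuous (by fun_prop) ?_
      intro y; simpa using h
    exact hc.measurable

/-- the time marginal of `J`, in `ℝ≥0∞` form -/
noncomputable def jhat (J : Sp n × ℝ → ℝ) : ℝ → ENNReal :=
  fun τ => ∫⁻ x : Sp n, ENNReal.ofReal (J (x, τ))

lemma jhat_meas (hJmeas : Measurable J) : Measurable (jhat J) := by
  have h : Measurable (Function.uncurry fun (x : Sp n) (τ : ℝ) => ENNReal.ofReal (J (x, τ))) :=
    ENNReal.measurable_ofReal.comp hJmeas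
  exact h.lintegral_prod_left

lemma jhat_zero (hJsupp : ∀ p : Sp n × ℝ, p.2 < 0 → J p = 0) {τ : ℝ} (hτ : τ < 0) :
    jhat J τ = 0 := by
  have : ∀ x : Sp n, ENNReal.ofReal (J (x, τ)) = 0 := fun x => by
    rw [hJsupp (x, τ) hτ]; simp
  simp [jhat, this]

lemma lintegral_J (hJnonneg : ∀ p, 0 ≤ J p) (hJint : Integrable J)
    (hJone : ∫ p : Sp n × ℝ, J p = 1) :
    ∫⁻ p : Sp n × ℝ, ENNReal.ofReal (J p) = 1 := by
  rw [← ofReal_integral_eq_lintegral_ofReal hJint (Filter.Eventually.of_forall hJnonneg), hJone,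
    ENNReal.ofReal_one]

lemma jhat_total (hJmeas : Measurable J) (hJnonneg : ∀ p, 0 ≤ J p) (hJint : Integrable J)
    (hJone : ∫ p : Sp n × ℝ, J p = 1) :
    ∫⁻ τ : ℝ, jhat J τ = 1 := by
  have h := lintegral_J J hJnonneg hJint hJone
  rw [Measure.volume_eq_prod] at h
  have h2 := lintegral_prod_symm (μ := (volume : Measure (Sp n))) (ν := (volume : Measure ℝ))
    (fun p => ENNReal.ofReal (J p)) ((ENNReal.measurable_ofReal.comp hJmeas).aemeasurable)
  exact h2.symm.trans h

/-- change of variables `s ↦ t - s` for lower integrals on `ℝ` -/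
lemma lint_comp_sub (g : ℝ → ENNReal) (hg : Measurable g) (t : ℝ) :
    ∫⁻ s : ℝ, g (t - s) = ∫⁻ τ : ℝ, g τ := by
  have h1 : MeasurePreserving (fun s : ℝ => t - s) volume volume := by
    have h2 := (measurePreserving_add_left (volume : Measure ℝ) t).comp
      (Measure.measurePreserving_neg (volume : Measure ℝ))
    simpa [Function.comp_def, sub_eq_add_neg] using h2
  exact h1.lintegral_comp hg


lemma exists_delta (hJmeas : Measurable J) (htot : ∫⁻ τ : ℝ, jhat J τ = 1) :
    ∃ δ : ℝ, 0 < δ ∧ ∫⁻ τ in Icc (0:ℝ) δ, jhat J τ ≤ 4⁻¹ := by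
  set μj := (volume : Measure ℝ).withDensity (jhat J) with hμj
  have happ : ∀ s : Set ℝ, MeasurableSet s → μj s = ∫⁻ τ in s, jhat J τ := fun s hs =>
    withDensity_apply _ hs
  have hanti : Antitone (fun m : ℕ => Icc (0:ℝ) (1/(m+1))) := by
    intro a b hab
    apply Icc_subset_Icc_right
    apply one_div_le_one_div_of_le (by positivity)
    exact_mod_cast add_le_add_left (Nat.cast_le.mpr hab) 1
  have hinter : (⋂ m : ℕ, Icc (0:ℝ) (1/(m+1))) = {0} := by
    ext x
    simp only [mem_iInter, mem_Icc, mem_singleton_iff]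
    constructor
    · rintro h
      by_contra hx
      have hx0 : 0 < x := lt_of_le_of_ne (h 0).1 (Ne.symm hx)
      obtain ⟨m, hm⟩ := exists_nat_one_div_lt hx0
      exact absurd ((h m).2) (by push_cast; linarith [hm])
    · rintro rfl
      exact fun m => ⟨le_refl _, by positivity⟩
  have hzero : μj ({0} : Set ℝ) = 0 := by
    rw [happ _ (measurableSet_singleton 0)]
    rw [Measure.restrict_eq_zero.mpr (by simp)]
    simp
  have hfin : ∃ m : ℕ, μj (Icc (0:ℝ) (1/(m+1))) ≠ ⊤ := by
    refine ⟨0, ?_⟩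
    rw [happ _ measurableSet_Icc]
    have hle : ∫⁻ τ in Icc (0:ℝ) (1/((0:ℕ)+1)), jhat J τ ≤ ∫⁻ τ : ℝ, jhat J τ :=
      lintegral_mono' Measure.restrict_le_self le_rfl
    rw [htot] at hle
    exact ne_of_lt (lt_of_le_of_lt hle ENNReal.one_lt_top)
  have htend : Filter.Tendsto (fun m : ℕ => μj (Icc (0:ℝ) (1/(m+1)))) Filter.atTop
      (nhds 0) := by
    have := MeasureTheory.tendsto_measure_iInter_atTop
      (μ := μj) (s := fun m : ℕ => Icc (0:ℝ) (1/(m+1)))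
      (fun m => measurableSet_Icc.nullMeasurableSet) hanti (by simpa using hfin)
    rwa [hinter, hzero] at this
  have hev := htend.eventually (gt_mem_nhds (show (0:ENNReal) < 4⁻¹ by norm_num))
  obtain ⟨m, hm⟩ := hev.exists
  refine ⟨1/(m+1), by positivity, ?_⟩
  rw [← happ _ measurableSet_Icc]
  exact le_of_lt hm

lemma exists_R0 (hJcpt : HasCompactSupport J) :
    ∃ R₀ : ℝ, 0 < R₀ ∧ ∀ p : Sp n × ℝ, R₀ < ‖p.1‖ → J p = 0 := by
  obtain ⟨r, hr⟩ := hJcpt.isBounded.subset_closedBall 0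
  refine ⟨max r 1, lt_of_lt_of_le one_pos (le_max_right r 1), fun p hp => ?_⟩
  apply image_eq_zero_of_notMem_tsupport
  intro hmem
  have h1 : ‖p‖ ≤ r := by simpa [mem_closedBall_zero_iff] using hr hmem
  have h2 : ‖p.1‖ ≤ ‖p‖ := norm_fst_le p
  have h3 : r ≤ max r 1 := le_max_left r 1
  linarith

noncomputable def wt (n : ℕ) (l : ℝ) (x : Sp n) : ENNReal :=
  ENNReal.ofReal ((1 + l * ‖x‖) ^ (-((n:ℝ)+1)))

lemma wt_meas (l : ℝ) (hl : 0 ≤ l) : Measurable (wt n l) := by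
  apply ENNReal.measurable_ofReal.comp
  apply Continuous.measurable
  apply Continuous.rpow_const (by fun_prop)
  intro x
  left
  have : (0:ℝ) < 1 + l * ‖x‖ := by positivity
  exact ne_of_gt this

lemma wt_le_one (l : ℝ) (hl : 0 ≤ l) (x : Sp n) : wt n l x ≤ 1 := by
  rw [wt, ← ENNReal.ofReal_one]
  apply ENNReal.ofReal_le_ofReal
  apply Real.rpow_le_one_of_one_le_of_nonpos
  · nlinarith [norm_nonneg x, mul_nonneg hl (norm_nonneg x)]
  · push_cast; linarith [Nat.cast_nonneg (α := ℝ) n]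

lemma wt_ne_top (l : ℝ) (x : Sp n) : wt n l x ≠ ⊤ := ENNReal.ofReal_ne_top

lemma wt_fin (l : ℝ) (hl : 0 < l) : ∫⁻ x : Sp n, wt n l x ≠ ⊤ := by
  have h0 : Integrable (fun x : Sp n => (1 + ‖x‖) ^ (-((n:ℝ)+1))) volume := by
    apply integrable_one_add_norm
    rw [finrank_euclideanSpace_fin]
    linarith
  have h1 : Integrable (fun x : Sp n => (1 + ‖l • x‖) ^ (-((n:ℝ)+1))) volume :=
    (integrable_comp_smul_iff (volume : Measure (Sp n))
      (fun x : Sp n => (1 + ‖x‖) ^ (-((n:ℝ)+1))) (ne_of_gt hl)).mpr h0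
  have h2 : Integrable (fun x : Sp n => (1 + l * ‖x‖) ^ (-((n:ℝ)+1))) volume := by
    refine h1.congr (Filter.Eventually.of_forall fun x => ?_)
    simp only [norm_smul, Real.norm_eq_abs, abs_of_pos hl]
  have h3 := h2.hasFiniteIntegral
  refine ne_of_lt (lt_of_le_of_lt ?_ h3)
  apply lintegral_mono
  intro x
  exact Real.ofReal_le_enorm _

lemma wt_transl (l : ℝ) (hl : 0 ≤ l) {R₀ : ℝ} (hR : 0 ≤ R₀) {x y : Sp n} (hx : ‖x‖ ≤ R₀) :
    wt n l (x + y) ≤ ENNReal.ofReal ((1 + l * R₀) ^ ((n:ℝ)+1)) * wt n l y := by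
  set r : ℝ := (n:ℝ) + 1 with hr
  have hrpos : 0 < r := by positivity
  set a : ℝ := 1 + l * ‖x + y‖ with ha
  set b : ℝ := 1 + l * ‖y‖ with hb
  set c : ℝ := 1 + l * R₀ with hc
  have ha1 : (1:ℝ) ≤ a := by nlinarith [norm_nonneg (x+y), mul_nonneg hl (norm_nonneg (x+y))]
  have hb1 : (1:ℝ) ≤ b := by nlinarith [norm_nonneg y, mul_nonneg hl (norm_nonneg y)]
  have hc1 : (1:ℝ) ≤ c := by nlinarith [mul_nonneg hl hR]
  have hba : b ≤ c * a := by
    have hy : ‖y‖ ≤ ‖x + y‖ + ‖x‖ := by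
      simpa [add_sub_cancel_left] using norm_sub_le (x + y) x
    have hlx : l * ‖x‖ ≤ l * R₀ := mul_le_mul_of_nonneg_left hx hl
    nlinarith [mul_nonneg hl (norm_nonneg (x+y)), mul_nonneg (mul_nonneg hl hR)
      (mul_nonneg hl (norm_nonneg (x+y)))]
  have hkey : a ^ (-r) ≤ c ^ r * b ^ (-r) := by
    have hbr : b ^ r ≤ c ^ r * a ^ r := by
      rw [← Real.mul_rpow (by linarith) (by linarith)]
      exact Real.rpow_le_rpow (by linarith) hba (le_of_lt hrpos)
    have hapos : (0:ℝ) < a ^ r := Real.rpow_pos_of_pos (by linarith) r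
    have hbpos : (0:ℝ) < b ^ r := Real.rpow_pos_of_pos (by linarith) r
    rw [Real.rpow_neg (by linarith : (0:ℝ) ≤ a), Real.rpow_neg (by linarith : (0:ℝ) ≤ b),
      ← div_eq_mul_inv, le_div_iff₀ hbpos, ← one_div, div_mul_eq_mul_div, div_le_iff₀ hapos,
      one_mul]
    linarith [hbr]
  calc wt n l (x + y) = ENNReal.ofReal (a ^ (-r)) := rfl
    _ ≤ ENNReal.ofReal (c ^ r * b ^ (-r)) := ENNReal.ofReal_le_ofReal hkey
    _ = ENNReal.ofReal (c ^ r) * ENNReal.ofReal (b ^ (-r)) :=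
        ENNReal.ofReal_mul (by positivity)
    _ = _ := rfl


noncomputable def Aw (u : Sp n × ℝ → ℝ) (l : ℝ) (t : ℝ) : ENNReal :=
  ∫⁻ x : Sp n, wt n l x * ENNReal.ofReal |u (x, t)|

variable (f : Sp n → ℝ) (u : Sp n × ℝ → ℝ) in
lemma master
    (hJnonneg : ∀ p, 0 ≤ J p) (hJmeas : Measurable J)
    (hfmeas : Measurable f)
    (hu_past : ∀ (y : Sp n) (s : ℝ), s < 0 → u (y, s) = f y)
    (hu_cont : ContinuousOn u {p : Sp n × ℝ | 0 ≤ p.2})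
    (hu_eq : ∀ (x : Sp n) (t : ℝ), 0 ≤ t →
      u (x, t) = ∫ q : Sp n × ℝ, J (x - q.1, t - q.2) * u q)
    {R₀ : ℝ} (hR₀ : 0 < R₀) (hR : ∀ p : Sp n × ℝ, R₀ < ‖p.1‖ → J p = 0)
    {l : ℝ} (hl : 0 < l) {t : ℝ} (ht : 0 ≤ t) :
    Aw u l t ≤ ENNReal.ofReal ((1 + l * R₀) ^ ((n:ℝ)+1)) *
      ∫⁻ s : ℝ, jhat J (t - s) * Aw u l s := by
  set c := ENNReal.ofReal ((1 + l * R₀) ^ ((n:ℝ)+1)) with hc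
  have hcne : c ≠ ⊤ := by rw [hc]; exact ENNReal.ofReal_ne_top
  have humeas := aemeas_u f u hfmeas hu_past hu_cont
  have humeas' : AEMeasurable u ((volume : Measure (Sp n)).prod (volume : Measure ℝ)) := by
    rw [← Measure.volume_eq_prod]; exact humeas
  have haeuq : AEMeasurable (fun q : Sp n × ℝ => ENNReal.ofReal |u q|) volume :=
    (ENNReal.measurable_ofReal.comp measurable_abs).comp_aemeasurable humeas
  have hptw : ∀ x : Sp n, ENNReal.ofReal |u (x, t)| ≤
      ∫⁻ q : Sp n × ℝ, ENNReal.ofReal (J (x - q.1, t - q.2)) * ENNReal.ofReal |u q| := by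
    intro x
    calc ENNReal.ofReal |u (x, t)|
        = (‖∫ q : Sp n × ℝ, J (x - q.1, t - q.2) * u q‖₊ : ENNReal) := by
          rw [← enorm_eq_nnnorm, Real.enorm_eq_ofReal_abs, ← hu_eq x t ht]
      _ ≤ ∫⁻ q : Sp n × ℝ, (‖J (x - q.1, t - q.2) * u q‖₊ : ENNReal) :=
          enorm_integral_le_lintegral_enorm _
      _ = ∫⁻ q : Sp n × ℝ, ENNReal.ofReal (J (x - q.1, t - q.2)) * ENNReal.ofReal |u q| := by
          apply lintegral_congr
          intro q
          rw [← enorm_eq_nnnorm, Real.enorm_eq_ofReal_abs, abs_mul,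
            ENNReal.ofReal_mul (abs_nonneg _), abs_of_nonneg (hJnonneg _)]
  have step1 : Aw u l t ≤
      ∫⁻ x : Sp n, ∫⁻ q : Sp n × ℝ,
        wt n l x * (ENNReal.ofReal (J (x - q.1, t - q.2)) * ENNReal.ofReal |u q|) := by
    apply lintegral_mono
    intro x
    beta_reduce
    rw [lintegral_const_mul' (wt n l x) _ (wt_ne_top l x)]
    exact mul_le_mul_right (hptw x) _
  have hswap : (∫⁻ x : Sp n, ∫⁻ q : Sp n × ℝ, wt n l x *
        (ENNReal.ofReal (J (x - q.1, t - q.2)) * ENNReal.ofReal |u q|)) =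
      ∫⁻ q : Sp n × ℝ, ∫⁻ x : Sp n, wt n l x *
        (ENNReal.ofReal (J (x - q.1, t - q.2)) * ENNReal.ofReal |u q|) := by
    apply lintegral_lintegral_swap
    have h1 : Measurable fun z : Sp n × (Sp n × ℝ) =>
        wt n l z.1 * ENNReal.ofReal (J (z.1 - z.2.1, t - z.2.2)) := by
      apply Measurable.mul ((wt_meas l hl.le).comp measurable_fst)
      apply ENNReal.measurable_ofReal.comp
      apply hJmeas.comp
      exact (measurable_fst.sub (measurable_fst.comp measurable_snd)).prodMk
        (measurable_const.sub (measurable_snd.comp measurable_snd))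
    have h2 : AEMeasurable (fun z : Sp n × (Sp n × ℝ) => ENNReal.ofReal |u z.2|)
        ((volume : Measure (Sp n)).prod (volume : Measure (Sp n × ℝ))) :=
      haeuq.comp_quasiMeasurePreserving Measure.quasiMeasurePreserving_snd
    have h3 := (h1.aemeasurable.mul h2)
    have h4 : (Function.uncurry fun (x : Sp n) (q : Sp n × ℝ) =>
        wt n l x * (ENNReal.ofReal (J (x - q.1, t - q.2)) * ENNReal.ofReal |u q|)) =
        fun z : Sp n × (Sp n × ℝ) =>
          (wt n l z.1 * ENNReal.ofReal (J (z.1 - z.2.1, t - z.2.2))) * ENNReal.ofReal |u z.2| := by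
      funext z
      simp only [Function.uncurry]
      ring
    rw [h4]
    exact h3
  have hinner : ∀ (y : Sp n) (τ : ℝ),
      (∫⁻ x : Sp n, wt n l x * ENNReal.ofReal (J (x - y, τ))) ≤ c * wt n l y * jhat J τ := by
    intro y τ
    have hmp := measurePreserving_add_right (volume : Measure (Sp n)) y
    have hmeasH : Measurable fun x : Sp n => wt n l x * ENNReal.ofReal (J (x - y, τ)) := by
      apply Measurable.mul (wt_meas l hl.le)
      apply ENNReal.measurable_ofReal.comp
      exact hJmeas.comp ((measurable_id.sub measurable_const).prodMk measurable_const)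
    have hcomp : (∫⁻ x : Sp n, wt n l (x + y) * ENNReal.ofReal (J (x + y - y, τ)))
        = ∫⁻ x : Sp n, wt n l x * ENNReal.ofReal (J (x - y, τ)) :=
      hmp.lintegral_comp hmeasH
    have hbnd : ∀ x : Sp n, wt n l (x + y) * ENNReal.ofReal (J (x + y - y, τ)) ≤
        (c * wt n l y) * ENNReal.ofReal (J (x, τ)) := by
      intro x
      rw [add_sub_cancel_right]
      rcases le_or_gt ‖x‖ R₀ with h | h
      · exact mul_le_mul_left (wt_transl l hl.le hR₀.le h) _
      · rw [hR (x, τ) (by simpa using h)]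
        simp
    calc (∫⁻ x : Sp n, wt n l x * ENNReal.ofReal (J (x - y, τ)))
        = ∫⁻ x : Sp n, wt n l (x + y) * ENNReal.ofReal (J (x + y - y, τ)) := hcomp.symm
      _ ≤ ∫⁻ x : Sp n, (c * wt n l y) * ENNReal.ofReal (J (x, τ)) := lintegral_mono hbnd
      _ = (c * wt n l y) * jhat J τ :=
          lintegral_const_mul' _ _ (ENNReal.mul_ne_top hcne (wt_ne_top l y))
      _ = c * wt n l y * jhat J τ := by rw [mul_assoc]
  have step2 : (∫⁻ q : Sp n × ℝ, ∫⁻ x : Sp n, wt n l x *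
        (ENNReal.ofReal (J (x - q.1, t - q.2)) * ENNReal.ofReal |u q|)) ≤
      c * ∫⁻ q : Sp n × ℝ, (wt n l q.1 * jhat J (t - q.2)) * ENNReal.ofReal |u q| := by
    rw [← lintegral_const_mul' c _ hcne]
    apply lintegral_mono
    intro q
    beta_reduce
    have h1 : (∫⁻ x : Sp n, wt n l x *
        (ENNReal.ofReal (J (x - q.1, t - q.2)) * ENNReal.ofReal |u q|)) =
        (∫⁻ x : Sp n, wt n l x * ENNReal.ofReal (J (x - q.1, t - q.2))) *
          ENNReal.ofReal |u q| := by
      rw [← lintegral_mul_const' (ENNReal.ofReal |u q|) _ ENNReal.ofReal_ne_top]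
      apply lintegral_congr
      intro x
      ring
    rw [h1]
    calc (∫⁻ x : Sp n, wt n l x * ENNReal.ofReal (J (x - q.1, t - q.2))) *
          ENNReal.ofReal |u q|
        ≤ (c * wt n l q.1 * jhat J (t - q.2)) * ENNReal.ofReal |u q| :=
          mul_le_mul_left (hinner q.1 (t - q.2)) _
      _ = c * ((wt n l q.1 * jhat J (t - q.2)) * ENNReal.ofReal |u q|) := by ring
  have step3 : (∫⁻ q : Sp n × ℝ, (wt n l q.1 * jhat J (t - q.2)) * ENNReal.ofReal |u q|) =
      ∫⁻ s : ℝ, jhat J (t - s) * Aw u l s := by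
    rw [Measure.volume_eq_prod]
    rw [lintegral_prod_symm]
    · apply lintegral_congr
      intro s
      have hminner : Measurable fun y : Sp n => wt n l y * ENNReal.ofReal |u (y, s)| := by
        apply (wt_meas l hl.le).mul
        exact ENNReal.measurable_ofReal.comp
          (measurable_abs.comp (slice_meas f u hfmeas hu_past hu_cont s))
      show (∫⁻ y : Sp n, (wt n l y * jhat J (t - s)) * ENNReal.ofReal |u (y, s)|) =
        jhat J (t - s) * ∫⁻ y : Sp n, wt n l y * ENNReal.ofReal |u (y, s)|
      rw [← lintegral_const_mul (jhat J (t - s)) hminner]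
      apply lintegral_congr
      intro y
      ring
    · apply AEMeasurable.mul
      · apply Measurable.aemeasurable
        apply Measurable.mul ((wt_meas l hl.le).comp measurable_fst)
        exact (jhat_meas J hJmeas).comp (measurable_const.sub measurable_snd)
      · exact (ENNReal.measurable_ofReal.comp measurable_abs).comp_aemeasurable humeas'
  calc Aw u l t ≤ _ := step1
    _ = _ := hswap
    _ ≤ _ := step2
    _ = c * ∫⁻ s : ℝ, jhat J (t - s) * Aw u l s := by rw [step3]

variable (u : Sp n × ℝ → ℝ) in
lemma contraction_step
    (hjz : ∀ τ : ℝ, τ < 0 → jhat J τ = 0) (hjm : Measurable (jhat J))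
    (hjtot : ∫⁻ τ : ℝ, jhat J τ = 1)
    {δ : ℝ} (hδ : 0 < δ) (hα : ∫⁻ τ in Icc (0:ℝ) δ, jhat J τ ≤ 4⁻¹)
    {l : ℝ} {c : ENNReal} (hc2 : c ≤ 2)
    (hmaster : ∀ t : ℝ, 0 ≤ t → Aw u l t ≤ c * ∫⁻ s : ℝ, jhat J (t - s) * Aw u l s)
    {F G : ENNReal} (hFG : F ≤ G) (hGtop : G ≠ ⊤)
    (hpast : ∀ s : ℝ, s < 0 → Aw u l s ≤ F)
    {K : ENNReal} (hK : K ≠ ⊤) (hfut : ∀ s : ℝ, 0 ≤ s → Aw u l s ≤ K)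
    {a : ℝ} (ha : 0 ≤ a)
    (hprev : ∀ s : ℝ, 0 ≤ s → s < a → Aw u l s ≤ G) :
    ∀ t : ℝ, 0 ≤ t → t ≤ a + δ → Aw u l t ≤ 4 * G := by
  set S : ENNReal := ⨆ t ∈ Icc (0:ℝ) (a + δ), Aw u l t with hS
  have hSK : S ≤ K := iSup₂_le fun t htmem => hfut t htmem.1
  have hSfin : S ≠ ⊤ := ne_top_of_le_ne_top hK hSK
  have h24 : (2:ENNReal) * 4⁻¹ = 2⁻¹ := by
    rw [show (4:ENNReal) = 2*2 by norm_num,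
      ENNReal.mul_inv (Or.inl (by norm_num)) (Or.inl ENNReal.ofNat_ne_top), ← mul_assoc,
      ENNReal.mul_inv_cancel (by norm_num) ENNReal.ofNat_ne_top, one_mul]
  have hkey : ∀ t : ℝ, 0 ≤ t → t ≤ a + δ → Aw u l t ≤ 2 * G + 2⁻¹ * S := by
    intro t ht hta
    refine le_trans (hmaster t ht) ?_
    have hsplit : (∫⁻ s : ℝ, jhat J (t - s) * Aw u l s) ≤
        ∫⁻ s : ℝ, (G * jhat J (t - s) + S * ((Icc (0:ℝ) δ).indicator (jhat J) (t - s))) := by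
      apply lintegral_mono
      intro s
      rcases lt_or_ge s a with hs | hs
      · have hG : Aw u l s ≤ G := by
          rcases lt_or_ge s 0 with h0 | h0
          · exact le_trans (hpast s h0) hFG
          · exact hprev s h0 hs
        calc jhat J (t - s) * Aw u l s ≤ jhat J (t - s) * G := mul_le_mul_right hG _
          _ = G * jhat J (t - s) := mul_comm _ _
          _ ≤ _ := self_le_add_right _ _
      · rcases le_or_gt s t with hst | hst
        · have hmem : (t - s) ∈ Icc (0:ℝ) δ := ⟨by linarith, by linarith⟩
          have hSb : Aw u l s ≤ S := by
            have hmem2 : s ∈ Icc (0:ℝ) (a + δ) := ⟨le_trans ha hs, by linarith⟩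
            exact le_biSup _ hmem2
          calc jhat J (t - s) * Aw u l s ≤ jhat J (t - s) * S := mul_le_mul_right hSb _
            _ = S * ((Icc (0:ℝ) δ).indicator (jhat J) (t - s)) := by
                rw [indicator_of_mem hmem, mul_comm]
            _ ≤ _ := self_le_add_left _ _
        · have hz : jhat J (t - s) = 0 := hjz _ (by linarith)
          simp [hz]
    have heval : (∫⁻ s : ℝ,
        (G * jhat J (t - s) + S * ((Icc (0:ℝ) δ).indicator (jhat J) (t - s))))
        = G * 1 + S * ∫⁻ τ in Icc (0:ℝ) δ, jhat J τ := by
      have hm1 : Measurable fun s : ℝ => jhat J (t - s) :=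
        hjm.comp (measurable_const.sub measurable_id)
      have hm2 : Measurable fun s : ℝ => ((Icc (0:ℝ) δ).indicator (jhat J)) (t - s) :=
        (hjm.indicator measurableSet_Icc).comp (measurable_const.sub measurable_id)
      rw [lintegral_add_left (hm1.const_mul G), lintegral_const_mul G hm1,
        lintegral_const_mul S hm2, lint_comp_sub _ hjm t, hjtot,
        lint_comp_sub _ (hjm.indicator measurableSet_Icc) t,
        lintegral_indicator measurableSet_Icc]
    have h5 : (∫⁻ s : ℝ, jhat J (t - s) * Aw u l s) ≤ G + S * 4⁻¹ := by
      refine le_trans hsplit ?_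
      rw [heval, mul_one]
      exact add_le_add le_rfl (mul_le_mul_right hα S)
    calc c * (∫⁻ s : ℝ, jhat J (t - s) * Aw u l s) ≤ 2 * (G + S * 4⁻¹) :=
          mul_le_mul' hc2 h5
      _ = 2 * G + S * (2 * 4⁻¹) := by ring
      _ = 2 * G + 2⁻¹ * S := by rw [h24]; ring
  have hScon : S ≤ 2 * G + 2⁻¹ * S := iSup₂_le fun t hmem => hkey t hmem.1 hmem.2
  have hhalf : S / 2 ≤ 2 * G := by
    have h6 : S - S / 2 ≤ 2 * G := by
      apply tsub_le_iff_right.mpr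
      refine le_trans hScon (le_of_eq ?_)
      rw [ENNReal.div_eq_inv_mul]
    rwa [ENNReal.sub_half hSfin] at h6
  have hS4 : S ≤ 4 * G := by
    calc S = S / 2 + S / 2 := (ENNReal.add_halves S).symm
      _ ≤ 2 * G + 2 * G := add_le_add hhalf hhalf
      _ = 4 * G := by ring
  intro t ht hta
  exact le_trans (le_biSup _ (⟨ht, hta⟩ : t ∈ Icc (0:ℝ) (a + δ))) hS4

variable (u : Sp n × ℝ → ℝ) in
lemma U_le (hsm : ∀ s : ℝ, Measurable fun y : Sp n => u (y, s))
    {l₀ : ℝ} (hl₀ : 0 < l₀) {t : ℝ} {C : ENNReal}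
    (hC : ∀ l : ℝ, 0 < l → l ≤ l₀ → Aw u l t ≤ C) :
    (∫⁻ y : Sp n, ENNReal.ofReal |u (y, t)|) ≤ C := by
  set lam : ℕ → ℝ := fun m => l₀ / (m + 1) with hlam
  have hlampos : ∀ m, 0 < lam m := fun m => by positivity
  have hlamle : ∀ m, lam m ≤ l₀ := fun m => by
    rw [hlam]
    apply div_le_self hl₀.le
    have : (0:ℝ) ≤ (m:ℝ) := Nat.cast_nonneg m
    linarith
  have hlamanti : ∀ m m' : ℕ, m ≤ m' → lam m' ≤ lam m := by
    intro m m' h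
    apply div_le_div_of_nonneg_left hl₀.le (by positivity)
    exact_mod_cast add_le_add_left (Nat.cast_le.mpr h) 1
  have hwt_mono : ∀ (l l' : ℝ), 0 ≤ l' → l' ≤ l → ∀ x : Sp n, wt n l x ≤ wt n l' x := by
    intro l l' hl' hle x
    apply ENNReal.ofReal_le_ofReal
    set r : ℝ := (n:ℝ) + 1
    have hrpos : (0:ℝ) < r := by positivity
    have ha1 : (1:ℝ) ≤ 1 + l' * ‖x‖ := by nlinarith [norm_nonneg x, mul_nonneg hl' (norm_nonneg x)]
    have hab : 1 + l' * ‖x‖ ≤ 1 + l * ‖x‖ := by nlinarith [norm_nonneg x]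
    rw [Real.rpow_neg (by linarith), Real.rpow_neg (by linarith)]
    have := Real.rpow_le_rpow (by linarith : (0:ℝ) ≤ 1 + l' * ‖x‖) hab hrpos.le
    apply inv_anti₀ (Real.rpow_pos_of_pos (by linarith) r) this
  have hmono : Monotone fun m => fun y : Sp n => wt n (lam m) y * ENNReal.ofReal |u (y, t)| := by
    intro m m' h
    intro y
    exact mul_le_mul_left (hwt_mono (lam m) (lam m') (hlampos m').le (hlamanti m m' h) y) _
  have hsup : ∀ y : Sp n, (⨆ m, wt n (lam m) y * ENNReal.ofReal |u (y, t)|)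
      = ENNReal.ofReal |u (y, t)| := by
    intro y
    rw [← ENNReal.iSup_mul]
    have hwsup : (⨆ m, wt n (lam m) y) = 1 := by
      have hwmono : Monotone fun m => wt n (lam m) y :=
        fun m m' h => hwt_mono (lam m) (lam m') (hlampos m').le (hlamanti m m' h) y
      have htendlam : Filter.Tendsto lam Filter.atTop (nhds 0) := by
        have h0 := tendsto_one_div_add_atTop_nhds_zero_nat (𝕜 := ℝ)
        have h1 := h0.const_mul l₀
        rw [mul_zero] at h1
        refine h1.congr fun m => ?_
        rw [hlam]
        field_simp
      have hbase : Filter.Tendsto (fun m => 1 + lam m * ‖y‖) Filter.atTop (nhds 1) := by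
        have h2 := (htendlam.mul_const ‖y‖).const_add 1
        simpa using h2
      have hrpow : Filter.Tendsto (fun m => (1 + lam m * ‖y‖) ^ (-((n:ℝ)+1)))
          Filter.atTop (nhds 1) := by
        have hca : ContinuousAt (fun z : ℝ => z ^ (-((n:ℝ)+1))) 1 :=
          Real.continuousAt_rpow_const 1 _ (Or.inl one_ne_zero)
        have h3 := hca.tendsto.comp hbase
        simpa [Real.one_rpow, Function.comp_def] using h3
      have htend : Filter.Tendsto (fun m => wt n (lam m) y) Filter.atTop (nhds 1) := by
        have h4 := ENNReal.tendsto_ofReal hrpow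
        rw [ENNReal.ofReal_one] at h4
        exact h4
      exact tendsto_nhds_unique (tendsto_atTop_iSup hwmono) htend
    rw [hwsup, one_mul]
  have hmeas : ∀ m : ℕ, Measurable fun y : Sp n => wt n (lam m) y * ENNReal.ofReal |u (y, t)| := by
    intro m
    exact (wt_meas (lam m) (hlampos m).le).mul
      (ENNReal.measurable_ofReal.comp (measurable_abs.comp (hsm t)))
  calc (∫⁻ y : Sp n, ENNReal.ofReal |u (y, t)|)
      = ∫⁻ y : Sp n, ⨆ m, wt n (lam m) y * ENNReal.ofReal |u (y, t)| :=
        lintegral_congr fun y => (hsup y).symm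
    _ = ⨆ m, ∫⁻ y : Sp n, wt n (lam m) y * ENNReal.ofReal |u (y, t)| :=
        lintegral_iSup hmeas hmono
    _ ≤ C := iSup_le fun m => hC (lam m) (hlampos m) (hlamle m)

variable (f : Sp n → ℝ) (u : Sp n × ℝ → ℝ) in
lemma part1
    (hJsupp : ∀ p : Sp n × ℝ, p.2 < 0 → J p = 0)
    (hJnonneg : ∀ p, 0 ≤ J p)
    (hJmeas : Measurable J)
    (hJint : Integrable J)
    (hJone : ∫ p : Sp n × ℝ, J p = 1)
    (hJcpt : HasCompactSupport J)
    (hfmeas : Measurable f) (hfint : Integrable f)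
    (hu_past : ∀ (y : Sp n) (s : ℝ), s < 0 → u (y, s) = f y)
    (hu_cont : ContinuousOn u {p : Sp n × ℝ | 0 ≤ p.2})
    (hu_bdd : ∃ M : ℝ, ∀ p : Sp n × ℝ, 0 ≤ p.2 → |u p| ≤ M)
    (hu_eq : ∀ (x : Sp n) (t : ℝ), 0 ≤ t →
      u (x, t) = ∫ q : Sp n × ℝ, J (x - q.1, t - q.2) * u q) :
    ∀ T : ℝ, 0 ≤ T → ∃ C : ENNReal, C ≠ ⊤ ∧
      ∀ t : ℝ, 0 ≤ t → t ≤ T → (∫⁻ y : Sp n, ENNReal.ofReal |u (y, t)|) ≤ C := by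
  obtain ⟨M, hM⟩ := hu_bdd
  obtain ⟨δ, hδ, hα⟩ := exists_delta J hJmeas (jhat_total J hJmeas hJnonneg hJint hJone)
  obtain ⟨R₀, hR₀, hR⟩ := exists_R0 J hJcpt
  set r : ℝ := (n:ℝ) + 1 with hrdef
  have hrpos : (0:ℝ) < r := by positivity
  set l₀ : ℝ := ((2:ℝ) ^ (1/r) - 1) / R₀ with hl₀def
  have h2r : (1:ℝ) < 2 ^ (1/r) :=
    (Real.one_lt_rpow_iff_of_pos (by norm_num)).mpr (Or.inl ⟨by norm_num, by positivity⟩)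
  have hl₀pos : 0 < l₀ := div_pos (by linarith) hR₀
  have hcbound : ∀ l : ℝ, 0 < l → l ≤ l₀ → ENNReal.ofReal ((1 + l * R₀) ^ r) ≤ 2 := by
    intro l hl hle
    have h1 : 1 + l * R₀ ≤ 2 ^ (1/r) := by
      have h0 : l * R₀ ≤ l₀ * R₀ := mul_le_mul_of_nonneg_right hle hR₀.le
      rw [hl₀def, div_mul_cancel₀ _ (ne_of_gt hR₀)] at h0
      linarith
    have h2 : (1 + l * R₀) ^ r ≤ ((2:ℝ) ^ (1/r)) ^ r :=
      Real.rpow_le_rpow (by positivity) h1 hrpos.le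
    rw [← Real.rpow_mul (by norm_num : (0:ℝ) ≤ 2), one_div,
      inv_mul_cancel₀ (ne_of_gt hrpos), Real.rpow_one] at h2
    calc ENNReal.ofReal ((1 + l * R₀) ^ r) ≤ ENNReal.ofReal 2 :=
          ENNReal.ofReal_le_ofReal h2
      _ = 2 := by norm_num
  set F : ENNReal := ∫⁻ y : Sp n, ENNReal.ofReal |f y| with hF
  have hFfin : F ≠ ⊤ := by
    have h1 : (∫⁻ y : Sp n, (‖f y‖₊ : ENNReal)) < ⊤ := hfint.hasFiniteIntegral
    have h2 : F = ∫⁻ y : Sp n, (‖f y‖₊ : ENNReal) :=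
      lintegral_congr fun y => (Real.enorm_eq_ofReal_abs (f y)).symm
    exact ne_of_lt (lt_of_le_of_lt (le_of_eq h2) h1)
  have hpast : ∀ l : ℝ, 0 < l → ∀ s : ℝ, s < 0 → Aw u l s ≤ F := by
    intro l hl s hs
    calc Aw u l s = ∫⁻ y : Sp n, wt n l y * ENNReal.ofReal |u (y, s)| := rfl
      _ ≤ ∫⁻ y : Sp n, 1 * ENNReal.ofReal |f y| := by
          apply lintegral_mono
          intro y
          beta_reduce
          rw [hu_past y s hs]
          exact mul_le_mul_left (wt_le_one l hl.le y) _
      _ = F := by rw [hF]; apply lintegral_congr; intro y; rw [one_mul]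
  have hfut : ∀ l : ℝ, 0 < l → ∀ s : ℝ, 0 ≤ s →
      Aw u l s ≤ ENNReal.ofReal M * ∫⁻ x : Sp n, wt n l x := by
    intro l hl s hs
    calc Aw u l s = ∫⁻ y : Sp n, wt n l y * ENNReal.ofReal |u (y, s)| := rfl
      _ ≤ ∫⁻ y : Sp n, wt n l y * ENNReal.ofReal M := by
          apply lintegral_mono
          intro y
          exact mul_le_mul_right (ENNReal.ofReal_le_ofReal (hM (y, s) hs)) _
      _ = ENNReal.ofReal M * ∫⁻ x : Sp n, wt n l x := by
          rw [lintegral_mul_const' _ _ ENNReal.ofReal_ne_top, mul_comm]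
  have hind : ∀ k : ℕ, ∀ l : ℝ, 0 < l → l ≤ l₀ → ∀ t : ℝ, 0 ≤ t → t < k * δ →
      Aw u l t ≤ F * 4 ^ k := by
    intro k
    induction k with
    | zero =>
      intro l hl hle t ht htk
      exfalso
      push_cast at htk
      linarith
    | succ k ih =>
      intro l hl hle t ht htk
      have hmaster : ∀ t : ℝ, 0 ≤ t → Aw u l t ≤ ENNReal.ofReal ((1 + l * R₀) ^ r) *
          ∫⁻ s : ℝ, jhat J (t - s) * Aw u l s := fun t' ht' =>
        master J f u hJnonneg hJmeas hfmeas hu_past hu_cont hu_eq hR₀ hR hl ht'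
      have h4k1 : (1:ENNReal) ≤ 4 ^ k := one_le_pow_of_one_le' (by norm_num : (1:ENNReal) ≤ 4) k
      have hstep := contraction_step J u (fun τ hτ => jhat_zero J hJsupp hτ)
        (jhat_meas J hJmeas) (jhat_total J hJmeas hJnonneg hJint hJone) hδ hα
        (hcbound l hl hle) hmaster
        (le_mul_of_one_le_right (zero_le (a := F)) h4k1)
        (ENNReal.mul_ne_top hFfin (ENNReal.pow_ne_top (by norm_num)))
        (hpast l hl)
        (ENNReal.mul_ne_top ENNReal.ofReal_ne_top (wt_fin l hl))
        (hfut l hl)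
        (mul_nonneg (Nat.cast_nonneg k) hδ.le : (0:ℝ) ≤ (k:ℝ) * δ)
        (fun s hs0 hsk => ih l hl hle s hs0 hsk)
      have h7 : t ≤ (k:ℝ) * δ + δ := by push_cast at htk; linarith
      calc Aw u l t ≤ 4 * (F * 4 ^ k) := hstep t ht h7
        _ = F * 4 ^ (k+1) := by ring
  intro T hT
  obtain ⟨k, hk⟩ := exists_nat_gt (T / δ)
  refine ⟨F * 4 ^ k, ENNReal.mul_ne_top hFfin (ENNReal.pow_ne_top (by norm_num)), ?_⟩
  intro t ht htT
  have htk : t < (k:ℝ) * δ := by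
    rw [div_lt_iff₀ hδ] at hk
    linarith
  exact U_le u (slice_meas f u hfmeas hu_past hu_cont) hl₀pos
    (fun l hl hle => hind k l hl hle t ht htk)

lemma sub_mp (t : ℝ) : MeasurePreserving (fun s : ℝ => t - s) volume volume := by
  have h2 := (measurePreserving_add_left (volume : Measure ℝ) t).comp
    (Measure.measurePreserving_neg (volume : Measure ℝ))
  simpa [Function.comp_def, sub_eq_add_neg] using h2

lemma sub_emb (t : ℝ) : MeasurableEmbedding (fun s : ℝ => t - s) :=
  (Homeomorph.subLeft t).measurableEmbedding

noncomputable def jbar (J : Sp n × ℝ → ℝ) : ℝ → ℝ := fun τ => ∫ x : Sp n, J (x, τ)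

lemma jbar_nonneg (hJnonneg : ∀ p, 0 ≤ J p) (τ : ℝ) : 0 ≤ jbar J τ :=
  integral_nonneg fun x => hJnonneg _

lemma jbar_zero (hJsupp : ∀ p : Sp n × ℝ, p.2 < 0 → J p = 0) {τ : ℝ} (hτ : τ < 0) :
    jbar J τ = 0 := by
  have h : ∀ x : Sp n, J (x, τ) = 0 := fun x => hJsupp (x, τ) hτ
  simp [jbar, h]

lemma swap_int (hJint : Integrable J) :
    Integrable (fun z : ℝ × Sp n => J (z.2, z.1))
      ((volume : Measure ℝ).prod (volume : Measure (Sp n))) := by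
  have h : Integrable J ((volume : Measure (Sp n)).prod (volume : Measure ℝ)) := by
    rw [← Measure.volume_eq_prod]; exact hJint
  exact h.swap

lemma jbar_meas (hJmeas : Measurable J) : StronglyMeasurable (jbar J) := by
  have h : StronglyMeasurable fun z : ℝ × Sp n => J (z.2, z.1) :=
    (hJmeas.comp measurable_swap).stronglyMeasurable
  exact h.integral_prod_right'

lemma jbar_int (hJint : Integrable J) : Integrable (jbar J) :=
  (swap_int J hJint).integral_prod_left

lemma jbar_total (hJint : Integrable J) (hJone : ∫ p : Sp n × ℝ, J p = 1) :
    ∫ τ : ℝ, jbar J τ = 1 := by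
  have hmp : MeasurePreserving (Prod.swap : ℝ × Sp n → Sp n × ℝ)
      ((volume : Measure ℝ).prod volume) ((volume : Measure (Sp n)).prod volume) :=
    Measure.measurePreserving_swap
  have hemb : MeasurableEmbedding (Prod.swap : ℝ × Sp n → Sp n × ℝ) :=
    MeasurableEquiv.prodComm.measurableEmbedding
  have h0 : (∫ z : ℝ × Sp n, J (z.2, z.1) ∂((volume : Measure ℝ).prod volume))
      = ∫ p : Sp n × ℝ, J p ∂((volume : Measure (Sp n)).prod volume) :=
    hmp.integral_comp hemb J
  have h0' : (∫ z : ℝ × Sp n, J (z.2, z.1) ∂((volume : Measure ℝ).prod volume)) = 1 := by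
    rw [h0, show ((volume : Measure (Sp n)).prod (volume : Measure ℝ)) = volume from
      (Measure.volume_eq_prod _ _).symm, hJone]
  have h1 : (∫ z : ℝ × Sp n, J (z.2, z.1) ∂((volume : Measure ℝ).prod volume))
      = ∫ τ : ℝ, jbar J τ := by
    rw [integral_prod _ (swap_int J hJint)]
    rfl
  exact h1.symm.trans h0'

lemma ofReal_jbar_le (hJnonneg : ∀ p, 0 ≤ J p) (τ : ℝ) :
    ENNReal.ofReal (jbar J τ) ≤ jhat J τ := by
  calc ENNReal.ofReal (jbar J τ) ≤ (‖jbar J τ‖₊ : ENNReal) := Real.ofReal_le_enorm _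
    _ ≤ ∫⁻ x : Sp n, (‖J (x, τ)‖₊ : ENNReal) := enorm_integral_le_lintegral_enorm _
    _ = jhat J τ := lintegral_congr fun x => by
        rw [← enorm_eq_nnnorm, Real.enorm_eq_ofReal_abs, abs_of_nonneg (hJnonneg _)]

lemma lint_transl (hJmeas : Measurable J) (y : Sp n) (τ : ℝ) :
    (∫⁻ x : Sp n, ENNReal.ofReal (J (x - y, τ))) = jhat J τ :=
  (measurePreserving_sub_right (volume : Measure (Sp n)) y).lintegral_comp
    (ENNReal.measurable_ofReal.comp (hJmeas.comp (measurable_id.prodMk measurable_const)))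

variable (f : Sp n → ℝ) (u : Sp n × ℝ → ℝ) in
lemma lint_weight (hfmeas : Measurable f)
    (hu_past : ∀ (y : Sp n) (s : ℝ), s < 0 → u (y, s) = f y)
    (hu_cont : ContinuousOn u {p : Sp n × ℝ | 0 ≤ p.2})
    (hjm : Measurable (jhat J)) (hjz : ∀ τ : ℝ, τ < 0 → jhat J τ = 0)
    (hjtot : ∫⁻ τ : ℝ, jhat J τ = 1)
    {t : ℝ} {C : ENNReal}
    (hCpast : (∫⁻ y : Sp n, ENNReal.ofReal |f y|) ≤ C)
    (hCfut : ∀ s : ℝ, 0 ≤ s → s ≤ t → (∫⁻ y : Sp n, ENNReal.ofReal |u (y, s)|) ≤ C) :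
    (∫⁻ q : Sp n × ℝ, jhat J (t - q.2) * ENNReal.ofReal |u q|) ≤ C := by
  have humeas' : AEMeasurable u ((volume : Measure (Sp n)).prod (volume : Measure ℝ)) := by
    rw [← Measure.volume_eq_prod]; exact aemeas_u f u hfmeas hu_past hu_cont
  have hmeasF : AEMeasurable (fun q : Sp n × ℝ => jhat J (t - q.2) * ENNReal.ofReal |u q|)
      ((volume : Measure (Sp n)).prod (volume : Measure ℝ)) := by
    apply AEMeasurable.mul
    · exact (hjm.comp (measurable_const.sub measurable_snd)).aemeasurable
    · exact (ENNReal.measurable_ofReal.comp measurable_abs).comp_aemeasurable humeas'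
  rw [Measure.volume_eq_prod, lintegral_prod_symm _ hmeasF]
  have hinner : ∀ s : ℝ, (∫⁻ y : Sp n, jhat J (t - s) * ENNReal.ofReal |u (y, s)|)
      = jhat J (t - s) * ∫⁻ y : Sp n, ENNReal.ofReal |u (y, s)| := fun s =>
    lintegral_const_mul _ (ENNReal.measurable_ofReal.comp (measurable_abs.comp
      (slice_meas f u hfmeas hu_past hu_cont s)))
  calc (∫⁻ s : ℝ, ∫⁻ y : Sp n, jhat J (t - s) * ENNReal.ofReal |u (y, s)|)
      = ∫⁻ s : ℝ, jhat J (t - s) * ∫⁻ y : Sp n, ENNReal.ofReal |u (y, s)| :=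
        lintegral_congr hinner
    _ ≤ ∫⁻ s : ℝ, jhat J (t - s) * C := by
        apply lintegral_mono
        intro s
        beta_reduce
        rcases lt_or_ge s 0 with h0 | h0
        · refine mul_le_mul_right (le_trans (le_of_eq ?_) hCpast) _
          exact lintegral_congr fun y => by rw [hu_past y s h0]
        · rcases le_or_gt s t with hst | hst
          · exact mul_le_mul_right (hCfut s h0 hst) _
          · rw [hjz _ (by linarith)]; simp
    _ ≤ C := by
        by_cases hC : C = ⊤
        · rw [hC]; exact le_top
        · rw [lintegral_mul_const' C _ hC, lint_comp_sub _ hjm t, hjtot, one_mul]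

end CTRW

open CTRW in
theorem ctrw_cauchy_problem_mass_conservation
    (n : ℕ) (hn : 1 ≤ n)
    (J : EuclideanSpace ℝ (Fin n) × ℝ → ℝ)
    (hJsupp : ∀ p : EuclideanSpace ℝ (Fin n) × ℝ, p.2 < 0 → J p = 0)
    (hJnonneg : ∀ p, 0 ≤ J p)
    (hJmeas : Measurable J)
    (hJint : Integrable J)
    (hJone : ∫ p : EuclideanSpace ℝ (Fin n) × ℝ, J p = 1)
    (hJcpt : HasCompactSupport J)
    (f : EuclideanSpace ℝ (Fin n) → ℝ)
    (hfmeas : Measurable f)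
    (hfint : Integrable f)
    (hfbdd : ∃ M : ℝ, ∀ x, |f x| ≤ M)
    (u : EuclideanSpace ℝ (Fin n) × ℝ → ℝ)
    (hu_past : ∀ (y : EuclideanSpace ℝ (Fin n)) (s : ℝ), s < 0 → u (y, s) = f y)
    (hu_cont : ContinuousOn u {p : EuclideanSpace ℝ (Fin n) × ℝ | 0 ≤ p.2})
    (hu_bdd : ∃ M : ℝ, ∀ p : EuclideanSpace ℝ (Fin n) × ℝ, 0 ≤ p.2 → |u p| ≤ M)
    (hu_eq : ∀ (x : EuclideanSpace ℝ (Fin n)) (t : ℝ), 0 ≤ t →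
      u (x, t) = ∫ q : EuclideanSpace ℝ (Fin n) × ℝ, J (x - q.1, t - q.2) * u q) :
    ∀ t : ℝ, 0 ≤ t →
      Integrable (fun x : EuclideanSpace ℝ (Fin n) => u (x, t)) ∧
      ∫ x : EuclideanSpace ℝ (Fin n), u (x, t) = ∫ x : EuclideanSpace ℝ (Fin n), f x := by
  have hsm := slice_meas f u hfmeas hu_past hu_cont
  have humeas := aemeas_u f u hfmeas hu_past hu_cont
  have hjm := jhat_meas J hJmeas
  have hjz : ∀ τ : ℝ, τ < 0 → jhat J τ = 0 := fun τ hτ => jhat_zero J hJsupp hτ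
  have hjtot := jhat_total J hJmeas hJnonneg hJint hJone
  have hjbint := jbar_int J hJint
  have hjbmeas := jbar_meas J hJmeas
  have hjbnn := jbar_nonneg J hJnonneg
  have hjbtot := jbar_total J hJint hJone
  obtain ⟨δ, hδ, hα⟩ := exists_delta J hJmeas hjtot
  have hpart1 := part1 J f u hJsupp hJnonneg hJmeas hJint hJone hJcpt hfmeas hfint
    hu_past hu_cont hu_bdd hu_eq
  -- real contraction constant
  have hαr : (∫ τ in Icc (0:ℝ) δ, jbar J τ) ≤ 4⁻¹ := by
    have h1 : ENNReal.ofReal (∫ τ in Icc (0:ℝ) δ, jbar J τ)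
        = ∫⁻ τ in Icc (0:ℝ) δ, ENNReal.ofReal (jbar J τ) :=
      ofReal_integral_eq_lintegral_ofReal hjbint.integrableOn
        (Filter.Eventually.of_forall hjbnn)
    have h2 : (∫⁻ τ in Icc (0:ℝ) δ, ENNReal.ofReal (jbar J τ))
        ≤ ∫⁻ τ in Icc (0:ℝ) δ, jhat J τ :=
      lintegral_mono fun τ => ofReal_jbar_le J hJnonneg τ
    have h3 : ENNReal.ofReal (∫ τ in Icc (0:ℝ) δ, jbar J τ) ≤ ENNReal.ofReal 4⁻¹ := by
      rw [h1]
      refine le_trans h2 (le_trans hα (le_of_eq ?_))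
      rw [ENNReal.ofReal_inv_of_pos (by norm_num), ENNReal.ofReal_ofNat]
    exact (ENNReal.ofReal_le_ofReal_iff (by norm_num)).mp h3
  set F : ENNReal := ∫⁻ y : EuclideanSpace ℝ (Fin n), ENNReal.ofReal |f y| with hF
  have hFfin' : F ≠ ⊤ := by
    have h1 : (∫⁻ y : EuclideanSpace ℝ (Fin n), (‖f y‖₊ : ENNReal)) < ⊤ :=
      hfint.hasFiniteIntegral
    have h2 : F = ∫⁻ y : EuclideanSpace ℝ (Fin n), (‖f y‖₊ : ENNReal) :=
      lintegral_congr fun y => (Real.enorm_eq_ofReal_abs (f y)).symm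
    exact ne_of_lt (lt_of_le_of_lt (le_of_eq h2) h1)
  -- integrability of slices
  have hslice_int : ∀ t : ℝ, 0 ≤ t →
      Integrable (fun y : EuclideanSpace ℝ (Fin n) => u (y, t)) := by
    intro t ht
    obtain ⟨C, hCne, hC⟩ := hpart1 t ht
    refine ⟨(hsm t).aestronglyMeasurable, ?_⟩
    have h1 : (∫⁻ y : EuclideanSpace ℝ (Fin n), (‖u (y, t)‖₊ : ENNReal))
        = ∫⁻ y : EuclideanSpace ℝ (Fin n), ENNReal.ofReal |u (y, t)| :=
      lintegral_congr fun y => Real.enorm_eq_ofReal_abs _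
    show (∫⁻ y : EuclideanSpace ℝ (Fin n), (‖u (y, t)‖₊ : ENNReal)) < ⊤
    rw [h1]
    exact lt_of_le_of_lt (hC t ht le_rfl) (lt_top_iff_ne_top.mpr hCne)
  -- space averages
  set m : ℝ → ℝ := fun s => ∫ y : EuclideanSpace ℝ (Fin n), u (y, s) with hm
  have hm_past : ∀ s : ℝ, s < 0 → m s = ∫ y, f y := by
    intro s hs
    exact integral_congr_ae (Filter.Eventually.of_forall fun y => hu_past y s hs)
  have humeas' : AEMeasurable u
      ((volume : Measure (EuclideanSpace ℝ (Fin n))).prod (volume : Measure ℝ)) := by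
    rw [← Measure.volume_eq_prod]; exact humeas
  have hm_meas : AEStronglyMeasurable m volume := by
    have husw : AEStronglyMeasurable
        (fun p : ℝ × EuclideanSpace ℝ (Fin n) => u (p.2, p.1))
        ((volume : Measure ℝ).prod volume) :=
      (humeas'.comp_quasiMeasurePreserving
        Measure.measurePreserving_swap.quasiMeasurePreserving).aestronglyMeasurable
    exact husw.integral_prod_right'
  -- uniform bounds for |m|
  have hm_bd : ∀ T : ℝ, 0 ≤ T → ∃ Cr : ℝ, 0 ≤ Cr ∧ ∀ s : ℝ, s ≤ T → |m s| ≤ Cr := by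
    intro T hT
    obtain ⟨C, hCne, hC⟩ := hpart1 T hT
    have hC'ne : C + F ≠ ⊤ := ENNReal.add_ne_top.mpr ⟨hCne, hFfin'⟩
    refine ⟨(C + F).toReal, ENNReal.toReal_nonneg, ?_⟩
    intro s hsT
    have hb : (‖m s‖₊ : ENNReal) ≤ ∫⁻ y, (‖u (y, s)‖₊ : ENNReal) :=
      enorm_integral_le_lintegral_enorm _
    have heq : (∫⁻ y : EuclideanSpace ℝ (Fin n), (‖u (y, s)‖₊ : ENNReal))
        = ∫⁻ y, ENNReal.ofReal |u (y, s)| :=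
      lintegral_congr fun y => Real.enorm_eq_ofReal_abs _
    rw [heq] at hb
    have hnn : (‖m s‖₊ : ENNReal) ≤ C + F := by
      rcases lt_or_ge s 0 with h0 | h0
      · have hpf : (∫⁻ y : EuclideanSpace ℝ (Fin n), ENNReal.ofReal |u (y, s)|) = F :=
          lintegral_congr fun y => by rw [hu_past y s h0]
        rw [hpf] at hb
        exact le_trans hb le_add_self
      · exact le_trans hb (le_trans (hC s h0 hsT) le_self_add)
    calc |m s| = ((‖m s‖₊ : ENNReal)).toReal := by
          rw [ENNReal.coe_toReal, coe_nnnorm, Real.norm_eq_abs]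
      _ ≤ (C + F).toReal := ENNReal.toReal_mono hC'ne hnn
  -- kernel translates in time
  have hjint_comp : ∀ t : ℝ, Integrable (fun s : ℝ => jbar J (t - s)) volume := by
    intro t
    exact ((sub_mp t).integrable_comp_emb (sub_emb t)).mpr hjbint
  have hind_comp : ∀ t : ℝ,
      Integrable (fun s : ℝ => ((Icc (0:ℝ) δ).indicator (jbar J)) (t - s)) volume := by
    intro t
    exact ((sub_mp t).integrable_comp_emb (sub_emb t)).mpr
      (hjbint.indicator measurableSet_Icc)
  have hjliner : ∀ t : ℝ, (∫ s : ℝ, jbar J (t - s)) = 1 := by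
    intro t
    rw [(sub_mp t).integral_comp (sub_emb t) (jbar J)]
    exact hjbtot
  -- the mass identity
  have hmass : ∀ t : ℝ, 0 ≤ t → m t = ∫ s : ℝ, m s * jbar J (t - s) := by
    intro t ht
    obtain ⟨C, hCne, hC⟩ := hpart1 t ht
    have hC'ne : C + F ≠ ⊤ := ENNReal.add_ne_top.mpr ⟨hCne, hFfin'⟩
    have hCpast : (∫⁻ y : EuclideanSpace ℝ (Fin n), ENNReal.ofReal |f y|) ≤ C + F :=
      le_add_self
    have hCfut : ∀ s : ℝ, 0 ≤ s → s ≤ t →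
        (∫⁻ y : EuclideanSpace ℝ (Fin n), ENNReal.ofReal |u (y, s)|) ≤ C + F :=
      fun s h1 h2 => le_trans (hC s h1 h2) le_self_add
    have hW := lint_weight J f u hfmeas hu_past hu_cont hjm hjz hjtot hCpast hCfut
    have hmJz : Measurable fun z :
        (EuclideanSpace ℝ (Fin n)) × ((EuclideanSpace ℝ (Fin n)) × ℝ) =>
        J (z.1 - z.2.1, t - z.2.2) :=
      hJmeas.comp ((measurable_fst.sub (measurable_fst.comp measurable_snd)).prodMk
        (measurable_const.sub (measurable_snd.comp measurable_snd)))
    have hu2 : AEMeasurable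
        (fun z : (EuclideanSpace ℝ (Fin n)) × ((EuclideanSpace ℝ (Fin n)) × ℝ) => u z.2)
        ((volume : Measure (EuclideanSpace ℝ (Fin n))).prod
          (volume : Measure (EuclideanSpace ℝ (Fin n) × ℝ))) :=
      humeas.comp_quasiMeasurePreserving Measure.quasiMeasurePreserving_snd
    have hmeasprod : AEMeasurable
        (fun z : (EuclideanSpace ℝ (Fin n)) × ((EuclideanSpace ℝ (Fin n)) × ℝ) =>
          ENNReal.ofReal (J (z.1 - z.2.1, t - z.2.2)) * ENNReal.ofReal |u z.2|)
        ((volume : Measure (EuclideanSpace ℝ (Fin n))).prod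
          (volume : Measure (EuclideanSpace ℝ (Fin n) × ℝ))) :=
      ((ENNReal.measurable_ofReal.comp hmJz).aemeasurable).mul
        ((ENNReal.measurable_ofReal.comp measurable_abs).comp_aemeasurable hu2)
    have hlv : (∫⁻ z :
        (EuclideanSpace ℝ (Fin n)) × ((EuclideanSpace ℝ (Fin n)) × ℝ),
        ENNReal.ofReal (J (z.1 - z.2.1, t - z.2.2)) * ENNReal.ofReal |u z.2|
        ∂((volume : Measure (EuclideanSpace ℝ (Fin n))).prod
          (volume : Measure (EuclideanSpace ℝ (Fin n) × ℝ)))) ≤ C + F := by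
      rw [lintegral_prod _ hmeasprod]
      rw [lintegral_lintegral_swap hmeasprod]
      have hq : ∀ q : EuclideanSpace ℝ (Fin n) × ℝ,
          (∫⁻ x : EuclideanSpace ℝ (Fin n),
            ENNReal.ofReal (J (x - q.1, t - q.2)) * ENNReal.ofReal |u q|)
          = jhat J (t - q.2) * ENNReal.ofReal |u q| := by
        intro q
        rw [lintegral_mul_const' _ _ ENNReal.ofReal_ne_top,
          lint_transl J hJmeas q.1 (t - q.2), mul_comm]
      calc (∫⁻ q : EuclideanSpace ℝ (Fin n) × ℝ, ∫⁻ x : EuclideanSpace ℝ (Fin n),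
            ENNReal.ofReal (J (x - q.1, t - q.2)) * ENNReal.ofReal |u q|)
          = ∫⁻ q : EuclideanSpace ℝ (Fin n) × ℝ,
            jhat J (t - q.2) * ENNReal.ofReal |u q| := lintegral_congr hq
        _ ≤ C + F := hW
    have hbigint : Integrable
        (fun z : (EuclideanSpace ℝ (Fin n)) × ((EuclideanSpace ℝ (Fin n)) × ℝ) =>
          J (z.1 - z.2.1, t - z.2.2) * u z.2)
        ((volume : Measure (EuclideanSpace ℝ (Fin n))).prod
          (volume : Measure (EuclideanSpace ℝ (Fin n) × ℝ))) := by
      constructor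
      · exact (hmJz.aemeasurable.mul hu2).aestronglyMeasurable
      · show (∫⁻ z : (EuclideanSpace ℝ (Fin n)) × ((EuclideanSpace ℝ (Fin n)) × ℝ),
            (‖J (z.1 - z.2.1, t - z.2.2) * u z.2‖₊ : ENNReal)
            ∂((volume : Measure (EuclideanSpace ℝ (Fin n))).prod
              (volume : Measure (EuclideanSpace ℝ (Fin n) × ℝ)))) < ⊤
        have heq1 : (∫⁻ z :
            (EuclideanSpace ℝ (Fin n)) × ((EuclideanSpace ℝ (Fin n)) × ℝ),
            (‖J (z.1 - z.2.1, t - z.2.2) * u z.2‖₊ : ENNReal)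
            ∂((volume : Measure (EuclideanSpace ℝ (Fin n))).prod
              (volume : Measure (EuclideanSpace ℝ (Fin n) × ℝ))))
            = ∫⁻ z, ENNReal.ofReal (J (z.1 - z.2.1, t - z.2.2)) * ENNReal.ofReal |u z.2|
            ∂((volume : Measure (EuclideanSpace ℝ (Fin n))).prod
              (volume : Measure (EuclideanSpace ℝ (Fin n) × ℝ))) :=
          lintegral_congr fun z => by
            rw [← enorm_eq_nnnorm, Real.enorm_eq_ofReal_abs, abs_mul, ENNReal.ofReal_mul (abs_nonneg _),
              abs_of_nonneg (hJnonneg _)]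
        rw [heq1]
        exact lt_of_le_of_lt hlv (lt_top_iff_ne_top.mpr hC'ne)
    have h1 : m t = ∫ x : EuclideanSpace ℝ (Fin n),
        ∫ q : EuclideanSpace ℝ (Fin n) × ℝ, J (x - q.1, t - q.2) * u q :=
      integral_congr_ae (Filter.Eventually.of_forall fun x => hu_eq x t ht)
    have h2 : (∫ x : EuclideanSpace ℝ (Fin n),
        ∫ q : EuclideanSpace ℝ (Fin n) × ℝ, J (x - q.1, t - q.2) * u q)
        = ∫ q : EuclideanSpace ℝ (Fin n) × ℝ,
          ∫ x : EuclideanSpace ℝ (Fin n), J (x - q.1, t - q.2) * u q :=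
      integral_integral_swap hbigint
    have h3 : (∫ q : EuclideanSpace ℝ (Fin n) × ℝ,
        ∫ x : EuclideanSpace ℝ (Fin n), J (x - q.1, t - q.2) * u q)
        = ∫ q : EuclideanSpace ℝ (Fin n) × ℝ, jbar J (t - q.2) * u q := by
      apply integral_congr_ae
      filter_upwards with q
      beta_reduce
      calc (∫ x : EuclideanSpace ℝ (Fin n), J (x - q.1, t - q.2) * u q)
          = (∫ x : EuclideanSpace ℝ (Fin n), J (x - q.1, t - q.2)) * u q :=
            integral_mul_const _ _
        _ = jbar J (t - q.2) * u q := by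
            rw [integral_sub_right_eq_self (fun x => J (x, t - q.2)) q.1]
            rfl
    have hqint : Integrable
        (fun q : EuclideanSpace ℝ (Fin n) × ℝ => jbar J (t - q.2) * u q) volume := by
      constructor
      · exact (((hjbmeas.measurable).comp
          (measurable_const.sub measurable_snd)).aemeasurable.mul
          humeas).aestronglyMeasurable
      · show (∫⁻ q, (‖jbar J (t - q.2) * u q‖₊ : ENNReal)) < ⊤
        have hptb : ∀ q : EuclideanSpace ℝ (Fin n) × ℝ,
            (‖jbar J (t - q.2) * u q‖₊ : ENNReal)
            ≤ jhat J (t - q.2) * ENNReal.ofReal |u q| := by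
          intro q
          rw [← enorm_eq_nnnorm, Real.enorm_eq_ofReal_abs, abs_mul, ENNReal.ofReal_mul (abs_nonneg _),
            abs_of_nonneg (hjbnn _)]
          exact mul_le_mul_left (ofReal_jbar_le J hJnonneg _) _
        exact lt_of_le_of_lt (le_trans (lintegral_mono hptb) hW)
          (lt_top_iff_ne_top.mpr hC'ne)
    have h4 : (∫ q : EuclideanSpace ℝ (Fin n) × ℝ, jbar J (t - q.2) * u q)
        = ∫ s : ℝ, ∫ y : EuclideanSpace ℝ (Fin n), jbar J (t - s) * u (y, s) := by
      rw [Measure.volume_eq_prod] at hqint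
      rw [show (volume : Measure (EuclideanSpace ℝ (Fin n) × ℝ)) =
        ((volume : Measure (EuclideanSpace ℝ (Fin n))).prod (volume : Measure ℝ)) from
        Measure.volume_eq_prod _ _]
      rw [integral_prod _ hqint]
      exact integral_integral_swap hqint
    have h5 : ∀ s : ℝ, (∫ y : EuclideanSpace ℝ (Fin n), jbar J (t - s) * u (y, s))
        = m s * jbar J (t - s) := by
      intro s
      rw [integral_const_mul, mul_comm]
    rw [h1, h2, h3, h4]
    exact integral_congr_ae (Filter.Eventually.of_forall h5)
  -- Gronwall
  set M₀ : ℝ := ∫ y : EuclideanSpace ℝ (Fin n), f y with hM₀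
  set g : ℝ → ℝ := fun s => m s - M₀ with hg
  have hgz : ∀ s : ℝ, s < 0 → g s = 0 := by
    intro s hs
    show m s - M₀ = 0
    rw [hm_past s hs]
    simp [hM₀]
  have hgint_dom : ∀ t : ℝ, 0 ≤ t → Integrable (fun s => m s * jbar J (t - s)) volume := by
    intro t ht
    obtain ⟨Cr, hCr0, hCr⟩ := hm_bd t ht
    apply Integrable.mono' ((hjint_comp t).const_mul Cr)
    · exact hm_meas.mul ((hjbmeas.measurable.comp
        (measurable_const.sub measurable_id)).aestronglyMeasurable)
    · apply Filter.Eventually.of_forall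
      intro s
      rw [Real.norm_eq_abs, abs_mul, abs_of_nonneg (hjbnn _)]
      rcases le_or_gt s t with h | h
      · exact mul_le_mul_of_nonneg_right (hCr s h) (hjbnn _)
      · rw [jbar_zero J hJsupp (by linarith)]
        simp
  have hgeq : ∀ t : ℝ, 0 ≤ t → g t = ∫ s : ℝ, g s * jbar J (t - s) := by
    intro t ht
    have e1 : (∫ s : ℝ, g s * jbar J (t - s))
        = ∫ s : ℝ, (m s * jbar J (t - s) - M₀ * jbar J (t - s)) := by
      apply integral_congr_ae
      filter_upwards with s
      show g s * jbar J (t - s) = _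
      rw [hg]
      ring
    rw [e1, integral_sub (hgint_dom t ht) ((hjint_comp t).const_mul M₀)]
    have e2 : (∫ s : ℝ, M₀ * jbar J (t - s)) = M₀ := by
      rw [integral_const_mul, hjliner t, mul_one]
    rw [e2]
    show m t - M₀ = _
    rw [← hmass t ht]
  have hgron : ∀ k : ℕ, ∀ t : ℝ, 0 ≤ t → t < k * δ → g t = 0 := by
    intro k
    induction k with
    | zero =>
      intro t ht htk
      exfalso
      push_cast at htk
      linarith
    | succ k ih =>
      intro t ht htk
      have hkd0 : (0:ℝ) ≤ (k:ℝ) * δ := by positivity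
      have hkd1 : (0:ℝ) ≤ ((k:ℝ) + 1) * δ := by positivity
      obtain ⟨Cr, hCr0, hCr⟩ := hm_bd (((k:ℝ) + 1) * δ) hkd1
      set I : Set ℝ := Icc ((k:ℝ) * δ) (((k:ℝ) + 1) * δ) with hI
      have hexp : ((k:ℝ) + 1) * δ = (k:ℝ) * δ + δ := by ring
      have hImem : ((k:ℝ) * δ) ∈ I := by
        constructor
        · exact le_refl ((k:ℝ) * δ)
        · rw [hexp]; linarith
      have hIne : ((fun s => |g s|) '' I).Nonempty :=
        ⟨|g ((k:ℝ) * δ)|, mem_image_of_mem _ hImem⟩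
      have hIbdd : BddAbove ((fun s => |g s|) '' I) := by
        refine ⟨Cr + |M₀|, ?_⟩
        rintro y ⟨s, hs, rfl⟩
        have h1 : |m s| ≤ Cr := hCr s hs.2
        have h2 : |g s| ≤ |m s| + |M₀| := by
          have h3 := abs_add_le (m s) (-M₀)
          show |m s - M₀| ≤ _
          simpa [sub_eq_add_neg] using h3
        simp only []
        linarith
      set S : ℝ := sSup ((fun s => |g s|) '' I) with hSdef
      have hS0 : 0 ≤ S :=
        le_trans (abs_nonneg _) (le_csSup hIbdd (mem_image_of_mem _ hImem))
      have hkey : ∀ τ : ℝ, 0 ≤ τ → τ ≤ ((k:ℝ) + 1) * δ → |g τ| ≤ S * 4⁻¹ := by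
        intro τ hτ0 hτle
        rcases lt_or_ge τ ((k:ℝ) * δ) with hτk | hτk
        · rw [ih τ hτ0 hτk]
          simp only [abs_zero]
          positivity
        · have hgτ := hgeq τ hτ0
          have hdom_int : Integrable
              (fun s : ℝ => S * ((Icc (0:ℝ) δ).indicator (jbar J)) (τ - s)) volume :=
            (hind_comp τ).const_mul S
          have hptw : ∀ s : ℝ, ‖g s * jbar J (τ - s)‖
              ≤ S * ((Icc (0:ℝ) δ).indicator (jbar J)) (τ - s) := by
            intro s
            have hind_nn : 0 ≤ ((Icc (0:ℝ) δ).indicator (jbar J)) (τ - s) :=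
              Set.indicator_apply_nonneg fun _ => hjbnn _
            rcases lt_or_ge s ((k:ℝ) * δ) with hs | hs
            · have hgs : g s = 0 := by
                rcases lt_or_ge s 0 with h0 | h0
                · exact hgz s h0
                · exact ih s h0 hs
              rw [hgs]
              simp only [zero_mul, norm_zero]
              positivity
            · rcases le_or_gt s τ with hsτ | hsτ
              · have hmem : τ - s ∈ Icc (0:ℝ) δ := by
                  constructor
                  · linarith
                  · rw [hexp] at hτle; linarith
                rw [indicator_of_mem hmem]
                have hgS : |g s| ≤ S := le_csSup hIbdd ⟨s, ⟨hs, by linarith⟩, rfl⟩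
                rw [Real.norm_eq_abs, abs_mul, abs_of_nonneg (hjbnn _)]
                exact mul_le_mul_of_nonneg_right hgS (hjbnn _)
              · rw [jbar_zero J hJsupp (by linarith : τ - s < 0)]
                simp only [mul_zero, norm_zero]
                positivity
          calc |g τ| = ‖∫ s : ℝ, g s * jbar J (τ - s)‖ := by
                rw [hgτ, Real.norm_eq_abs]
            _ ≤ ∫ s : ℝ, S * ((Icc (0:ℝ) δ).indicator (jbar J)) (τ - s) :=
                norm_integral_le_of_norm_le hdom_int (Filter.Eventually.of_forall hptw)
            _ = S * ∫ s : ℝ, ((Icc (0:ℝ) δ).indicator (jbar J)) (τ - s) :=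
                integral_const_mul _ _
            _ = S * ∫ τ' in Icc (0:ℝ) δ, jbar J τ' := by
                rw [(sub_mp τ).integral_comp (sub_emb τ)
                  ((Icc (0:ℝ) δ).indicator (jbar J)),
                  integral_indicator measurableSet_Icc]
            _ ≤ S * 4⁻¹ := mul_le_mul_of_nonneg_left hαr hS0
      have hS14 : S ≤ S * 4⁻¹ := by
        apply csSup_le hIne
        rintro y ⟨s, hsmem, rfl⟩
        exact hkey s (le_trans hkd0 hsmem.1) hsmem.2
      have hS00 : S = 0 := by linarith
      rcases lt_or_ge t ((k:ℝ) * δ) with h | h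
      · exact ih t ht h
      · have hb := hkey t ht (by push_cast at htk; linarith)
        rw [hS00, zero_mul] at hb
        exact abs_eq_zero.mp (le_antisymm hb (abs_nonneg _))
  intro t ht
  refine ⟨hslice_int t ht, ?_⟩
  obtain ⟨k, hk⟩ := exists_nat_gt (t / δ)
  have htk : t < (k:ℝ) * δ := by
    rw [div_lt_iff₀ hδ] at hk
    linarith
  have hgt := hgron k t ht htk
  have hmt : m t = M₀ := by
    have h2 : m t - M₀ = 0 := hgt
    linarith
  show m t = M₀
  exact hmt
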